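/- Let T be a decision tree over m real-valued features with labels in a type L, and let x, v : Fin m → ℝ. If for every internal node of T, say with feature index i and threshold d, one has (x i < d ↔ v i < d), then eval T x = eval T v. Consequently, for a tree ensemble T : Fin n → DTree (Fin K × ℝ): if, writing S_i for the set of thresholds d occurring together with feature i in some internal node of some tree of the ensemble, the points x and v satisfy (x i < d ↔ v i < d) for every i and every d ∈ S_i (i.e., x and v lie in the same cell of the interval partition induced by the split points), then every tree of the ensemble evaluates identically on x and v, and hence all class scores satisfy W(c, x) = W(c, v) for every class c. -/

import Mathlib

/-- Decision trees over `m` real-valued features with labels in `L`. -/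
inductive DTree (m : ℕ) (L : Type) : Type
  | leaf (c : L) : DTree m L
  | node (i : Fin m) (d : ℝ) (tl tr : DTree m L) : DTree m L

/-- Evaluation of a decision tree on an input point. -/
noncomputable def DTree.eval {m : ℕ} {L : Type} : DTree m L → (Fin m → ℝ) → L
  | .leaf c, _ => c
  | .node i d tl tr, x => if x i < d then tl.eval x else tr.eval x

/-- The list of (feature, threshold) pairs occurring at the internal nodes of a
decision tree. -/
def DTree.splits {m : ℕ} {L : Type} : DTree m L → List (Fin m × ℝ)
  | .leaf _ => []
  | .node i d tl tr => (i, d) :: (tl.splits ++ tr.splits)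

/-- Class score of a tree ensemble: sum of the weights of the leaves reached in
the trees whose reached leaf carries class `c`. -/
noncomputable def ensembleScore {m n K : ℕ} (T : Fin n → DTree m (Fin K × ℝ))
    (c : Fin K) (x : Fin m → ℝ) : ℝ :=
  ∑ t ∈ Finset.univ.filter (fun t : Fin n => ((T t).eval x).1 = c), ((T t).eval x).2

namespace DTree

variable {m : ℕ} {L : Type}

theorem eval_eq_of_forall_splits (T : DTree m L) {x v : Fin m → ℝ}
    (h : ∀ p ∈ T.splits, (x p.1 < p.2 ↔ v p.1 < p.2)) : T.eval x = T.eval v := by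
  induction T with
  | leaf c => rfl
  | node i d tl tr ihl ihr =>
    simp only [splits, List.mem_cons, List.mem_append, forall_eq_or_imp] at h
    obtain ⟨hid, hsub⟩ := h
    simp only [eval, hid]
    rw [ihl fun p hp => hsub p (.inl hp), ihr fun p hp => hsub p (.inr hp)]

end DTree

theorem ensembleScore_congr {m n K : ℕ} {T : Fin n → DTree m (Fin K × ℝ)} {x v : Fin m → ℝ}
    (h : ∀ t, (T t).eval x = (T t).eval v) (c : Fin K) :
    ensembleScore T c x = ensembleScore T c v := by
  simp only [ensembleScore, h]

/-- If two points are on the same side of every split condition occurring in a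
tree then the tree evaluates identically on them; consequently, if two points lie
in the same cell of the interval partition induced by the split points of a tree
ensemble, then every tree of the ensemble evaluates identically on them and all
class scores agree. -/
theorem eval_const_on_cells (m n K : ℕ) (L : Type) :
    (∀ (T : DTree m L) (x v : Fin m → ℝ),
      (∀ p ∈ T.splits, (x p.1 < p.2 ↔ v p.1 < p.2)) → T.eval x = T.eval v) ∧
    (∀ (T : Fin n → DTree m (Fin K × ℝ)) (x v : Fin m → ℝ),
      (∀ (i : Fin m) (d : ℝ), (∃ t : Fin n, (i, d) ∈ (T t).splits) →
        (x i < d ↔ v i < d)) →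
      (∀ t : Fin n, (T t).eval x = (T t).eval v) ∧
      (∀ c : Fin K, ensembleScore T c x = ensembleScore T c v)) := by
  refine ⟨fun T x v h => T.eval_eq_of_forall_splits h, fun T x v h => ?_⟩
  have heval : ∀ t, (T t).eval x = (T t).eval v := fun t =>
    (T t).eval_eq_of_forall_splits fun p hp => h p.1 p.2 ⟨t, hp⟩
  exact ⟨heval, ensembleScore_congr heval⟩
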